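/- Let X^1,...,X^m be i.i.d. Rademacher random vectors in {-1,1}^d, A ∈ R^{d×d}, i ∈ [d], and D^m_i(A) = (1/m) Σ_{k=1}^m (X^k ⊙ AX^k)_i. Then for any ε ≥ 0, P(|D^m_i(A) − A_{ii}| ≥ ε) ≤ 2 exp(−ε² m / (2(||A_i||_2² − A_{ii}²))). -/

import Mathlib

open scoped BigOperators ENNReal
open MeasureTheory ProbabilityTheory

/-- The Rademacher law on ℝ: `±1` with probability `1/2` each. -/
noncomputable def rademacherLaw : Measure ℝ :=
  (2 : ℝ≥0∞)⁻¹ • Measure.dirac (1 : ℝ) + (2 : ℝ≥0∞)⁻¹ • Measure.dirac (-1 : ℝ)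

/-- The real sign of a boolean. -/
noncomputable def rsign (b : Bool) : ℝ := if b then 1 else -1

lemma rsign_mul_beq (a b : Bool) : rsign a * rsign (a == b) = rsign b := by
  cases a <;> cases b <;> norm_num [rsign]

lemma rsign_mul_self (a : Bool) : rsign a * rsign a = 1 := by
  cases a <;> norm_num [rsign]

instance : IsProbabilityMeasure rademacherLaw := by
  constructor
  simp [rademacherLaw, ENNReal.inv_two_add_inv_two]

lemma rademacherLaw_apply {s : Set ℝ} (hs : MeasurableSet s) :
    rademacherLaw s = 2⁻¹ * s.indicator 1 (1 : ℝ) + 2⁻¹ * s.indicator 1 (-1 : ℝ) := by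
  simp [rademacherLaw, Measure.dirac_apply' _ hs]

lemma indicator_univ_pi {ι : Type*} [Fintype ι] (s : ι → Set ℝ) (x : ι → ℝ) :
    (Set.pi Set.univ s).indicator (1 : (ι → ℝ) → ℝ≥0∞) x
      = ∏ p, (s p).indicator (1 : ℝ → ℝ≥0∞) (x p) := by
  by_cases h : x ∈ Set.pi Set.univ s
  · rw [Set.indicator_of_mem h]
    refine (Finset.prod_eq_one fun p _ => ?_).symm
    exact Set.indicator_of_mem (h p trivial) _
  · rw [Set.indicator_of_notMem h]
    rw [Set.mem_univ_pi] at h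
    push_neg at h
    obtain ⟨p, hp⟩ := h
    exact ((Finset.prod_eq_zero (Finset.mem_univ p) (Set.indicator_of_notMem hp _))).symm

/-- The product of Rademacher laws is the uniform measure on sign patterns. -/
lemma pi_rademacher {ι : Type*} [Fintype ι] [DecidableEq ι] :
    Measure.pi (fun _ : ι => rademacherLaw)
      = ((2 : ℝ≥0∞) ^ Fintype.card ι)⁻¹ •
          ∑ σ : ι → Bool, Measure.dirac (fun p => rsign (σ p)) := by
  refine Measure.pi_eq fun s hs => ?_
  have hps : MeasurableSet (Set.pi Set.univ s) := MeasurableSet.univ_pi hs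
  rw [Measure.smul_apply, Measure.finset_sum_apply]
  simp_rw [Measure.dirac_apply' _ hps, indicator_univ_pi]
  rw [← Fintype.piFinset_univ, ← Finset.prod_univ_sum
    (fun _ : ι => (Finset.univ : Finset Bool))
    (fun p b => (s p).indicator (1 : ℝ → ℝ≥0∞) (rsign b))]
  have hb : ∀ p : ι, (∑ b : Bool, (s p).indicator (1 : ℝ → ℝ≥0∞) (rsign b))
      = 2 * rademacherLaw (s p) := by
    intro p
    rw [rademacherLaw_apply (hs p), Fintype.sum_bool, mul_add, ← mul_assoc, ← mul_assoc,
      ENNReal.mul_inv_cancel two_ne_zero ENNReal.ofNat_ne_top, one_mul, one_mul]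
    norm_num [rsign]
  simp_rw [hb]
  rw [Finset.prod_mul_distrib, Finset.prod_const, Finset.card_univ, smul_eq_mul, ← mul_assoc,
    ENNReal.inv_mul_cancel (by positivity) (by simp [ENNReal.pow_ne_top]), one_mul]

open Classical in
lemma pi_rademacher_apply {ι : Type*} [Fintype ι] [DecidableEq ι] {S : Set (ι → ℝ)}
    (hS : MeasurableSet S) :
    Measure.pi (fun _ : ι => rademacherLaw) S
      = ((2 : ℝ≥0∞) ^ Fintype.card ι)⁻¹ *
          ((Finset.univ.filter fun σ : ι → Bool => (fun p => rsign (σ p)) ∈ S).card : ℕ) := by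
  classical
  rw [pi_rademacher, Measure.smul_apply, Measure.finset_sum_apply, smul_eq_mul]
  congr 1
  simp_rw [Measure.dirac_apply' _ hS, Set.indicator_apply, Pi.one_apply]
  rw [Finset.sum_boole]

open Classical in
lemma filter_card_le_sum_exp {α : Type*} [Fintype α] (f : α → ℝ) (a t : ℝ) (ht : 0 ≤ t) :
    ((Finset.univ.filter fun x => a ≤ f x).card : ℝ) * Real.exp (t * a)
      ≤ ∑ x : α, Real.exp (t * f x) := by
  calc ((Finset.univ.filter fun x => a ≤ f x).card : ℝ) * Real.exp (t * a)
      = ∑ _x ∈ Finset.univ.filter (fun x => a ≤ f x), Real.exp (t * a) := by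
        rw [Finset.sum_const, nsmul_eq_mul]
    _ ≤ ∑ x ∈ Finset.univ.filter (fun x => a ≤ f x), Real.exp (t * f x) := by
        refine Finset.sum_le_sum fun x hx => ?_
        exact Real.exp_le_exp.2 (mul_le_mul_of_nonneg_left (Finset.mem_filter.1 hx).2 ht)
    _ ≤ ∑ x : α, Real.exp (t * f x) :=
        Finset.sum_le_sum_of_subset_of_nonneg (Finset.filter_subset _ _)
          (fun _ _ _ => (Real.exp_pos _).le)

lemma sum_exp_rsign {α : Type*} [Fintype α] [DecidableEq α] (c : α → ℝ) (t : ℝ) :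
    ∑ τ : α → Bool, Real.exp (t * ∑ p, c p * rsign (τ p))
      ≤ 2 ^ Fintype.card α * Real.exp (t ^ 2 * (∑ p, (c p) ^ 2) / 2) := by
  have h1 : ∀ τ : α → Bool, Real.exp (t * ∑ p, c p * rsign (τ p))
      = ∏ p, Real.exp (t * (c p * rsign (τ p))) := by
    intro τ; rw [← Real.exp_sum, ← Finset.mul_sum]
  simp_rw [h1]
  rw [← Fintype.piFinset_univ, ← Finset.prod_univ_sum
    (fun _ : α => (Finset.univ : Finset Bool))
    (fun p b => Real.exp (t * (c p * rsign b)))]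
  have h2 : ∀ p : α, (∑ b : Bool, Real.exp (t * (c p * rsign b)))
      = 2 * Real.cosh (t * c p) := by
    intro p
    rw [Fintype.sum_bool, Real.cosh_eq]
    simp [rsign]
    ring
  simp_rw [h2]
  calc ∏ p, 2 * Real.cosh (t * c p)
      ≤ ∏ p, 2 * Real.exp ((t * c p) ^ 2 / 2) := by
        refine Finset.prod_le_prod (fun p _ => by positivity) fun p _ => ?_
        have := Real.cosh_le_exp_half_sq (t * c p)
        nlinarith [this]
    _ = 2 ^ Fintype.card α * Real.exp (t ^ 2 * (∑ p, (c p) ^ 2) / 2) := by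
        rw [Finset.prod_mul_distrib, Finset.prod_const, Finset.card_univ, ← Real.exp_sum]
        congr 1
        rw [← Finset.sum_div, Finset.mul_sum]
        simp_rw [mul_pow]

/-- The involution on sign patterns replacing `σ (k, j)` by `σ (k,i) * σ (k,j)` off column `i`. -/
def flipAt {m d : ℕ} (i : Fin d) (σ : Fin m × Fin d → Bool) : Fin m × Fin d → Bool :=
  fun p => if p.2 = i then σ p else (σ (p.1, i) == σ p)

lemma flipAt_flipAt {m d : ℕ} (i : Fin d) (σ : Fin m × Fin d → Bool) :
    flipAt i (flipAt i σ) = σ := by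
  have hbool : ∀ a b : Bool, (a == (a == b)) = b := by decide
  funext p
  obtain ⟨k, j⟩ := p
  by_cases hj : j = i
  · subst hj; simp [flipAt]
  · simp only [flipAt, if_neg hj, if_pos rfl]
    exact hbool _ _

open Classical in
lemma count_bound (d m : ℕ) (hm : 0 < m) (A : Matrix (Fin d) (Fin d) ℝ) (i : Fin d)
    (hrow : (A i i) ^ 2 < ∑ j, (A i j) ^ 2) (ε : ℝ) (hε : 0 ≤ ε) :
    ((Finset.univ.filter fun σ : Fin m × Fin d → Bool =>
        ε ≤ |(m : ℝ)⁻¹ * (∑ k, rsign (σ (k, i)) * (∑ j, A i j * rsign (σ (k, j)))) - A i i|).card : ℝ)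
      ≤ 2 ^ Fintype.card (Fin m × Fin d) *
        (2 * Real.exp (-(ε ^ 2 * m) / (2 * ((∑ j, (A i j) ^ 2) - (A i i) ^ 2)))) := by
  have hmR : (0 : ℝ) < m := by exact_mod_cast hm
  set v : ℝ := (∑ j, (A i j) ^ 2) - (A i i) ^ 2 with hv
  have hv0 : 0 < v := sub_pos.2 hrow
  set c : Fin m × Fin d → ℝ := fun p => if p.2 = i then 0 else A i p.2 with hc
  set U : (Fin m × Fin d → Bool) → ℝ := fun τ => ∑ p, c p * rsign (τ p) with hU
  set T : (Fin m × Fin d → Bool) → ℝ :=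
    fun σ => ∑ k, rsign (σ (k, i)) * (∑ j, A i j * rsign (σ (k, j))) with hT
  show ((Finset.univ.filter fun σ : Fin m × Fin d → Bool =>
      ε ≤ |(m : ℝ)⁻¹ * T σ - A i i|).card : ℝ) ≤ _
  -- sum of squares of the coefficients
  have hsumc : (∑ p, (c p) ^ 2) = m * v := by
    rw [Fintype.sum_prod_type]
    have hinner : ∀ k : Fin m, (∑ j, (c (k, j)) ^ 2) = v := by
      intro k
      have h1 : ∀ j : Fin d, (c (k, j)) ^ 2
          = (A i j) ^ 2 - (if j = i then (A i j) ^ 2 else 0) := by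
        intro j
        by_cases hj : j = i
        · simp [hc, hj]
        · simp [hc, hj]
      simp only [h1]
      rw [Finset.sum_sub_distrib, Finset.sum_ite_eq' Finset.univ i fun j => (A i j) ^ 2]
      simp [hv]
    simp only [hinner]
    simp [Finset.sum_const, mul_comm]
  have hUτ : ∀ τ, U τ = ∑ k : Fin m, ∑ j : Fin d,
      (if j = i then 0 else A i j * rsign (τ (k, j))) := by
    intro τ
    simp only [hU]
    rw [Fintype.sum_prod_type]
    refine Finset.sum_congr rfl fun k _ => Finset.sum_congr rfl fun j _ => ?_
    by_cases hj : j = i <;> simp [hc, hj]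
  -- the key identity via the involution
  have hTφ : ∀ τ, T (flipAt i τ) = m * A i i + U τ := by
    intro τ
    have hinner : ∀ k : Fin m,
        rsign (flipAt i τ (k, i)) * (∑ j, A i j * rsign (flipAt i τ (k, j)))
          = A i i + ∑ j, (if j = i then 0 else A i j * rsign (τ (k, j))) := by
      intro k
      have hki : flipAt i τ (k, i) = τ (k, i) := if_pos rfl
      rw [hki, Finset.mul_sum]
      have hterm : ∀ j : Fin d, rsign (τ (k, i)) * (A i j * rsign (flipAt i τ (k, j)))
          = (if j = i then A i i else 0) + (if j = i then 0 else A i j * rsign (τ (k, j))) := by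
        intro j
        by_cases hj : j = i
        · have e1 : (if j = i then A i i else 0) = A i i := if_pos hj
          have e2 : (if j = i then 0 else A i j * rsign (τ (k, j))) = (0 : ℝ) := if_pos hj
          rw [e1, e2, hj, hki]
          linear_combination A i i * rsign_mul_self (τ (k, i))
        · have h0 : flipAt i τ (k, j) = (τ (k, i) == τ (k, j)) := if_neg hj
          rw [h0]
          have h2 := rsign_mul_beq (τ (k, i)) (τ (k, j))
          simp only [if_neg hj]
          linear_combination A i j * h2
      simp only [hterm]
      rw [Finset.sum_add_distrib, Finset.sum_ite_eq' Finset.univ i fun _ => A i i]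
      simp
    simp only [hT, hinner]
    rw [Finset.sum_add_distrib, Finset.sum_const, Finset.card_univ, Fintype.card_fin,
      nsmul_eq_mul, hUτ τ]
  -- transfer the filter through the involution
  have hcard : ∀ P : ℝ → Prop,
      (Finset.univ.filter fun σ => P (T σ)).card
        = (Finset.univ.filter fun τ => P (m * A i i + U τ)).card := by
    intro P
    refine (Finset.card_equiv ⟨flipAt i, flipAt i, flipAt_flipAt i, flipAt_flipAt i⟩
      fun τ => ?_).symm
    simp only [Finset.mem_filter, Finset.mem_univ, true_and, Equiv.coe_fn_mk]
    rw [hTφ τ]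
  -- rewrite the main event
  have hpred : ∀ τ, (ε ≤ |(m : ℝ)⁻¹ * (m * A i i + U τ) - A i i|)
      ↔ (m * ε ≤ U τ ∨ U τ ≤ -(m * ε)) := by
    intro τ
    have h1 : (m : ℝ)⁻¹ * (m * A i i + U τ) - A i i = (m : ℝ)⁻¹ * U τ := by
      field_simp
      ring
    rw [h1, abs_mul, abs_inv, abs_of_pos hmR, inv_mul_eq_div, le_div_iff₀ hmR,
      mul_comm ε (m : ℝ), le_abs]
    constructor
    · rintro (h | h)
      · exact Or.inl h
      · exact Or.inr (by linarith)
    · rintro (h | h)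
      · exact Or.inl h
      · exact Or.inr (by linarith)
  -- Chernoff parameter
  set t : ℝ := ε / v with ht
  have ht0 : 0 ≤ t := div_nonneg hε hv0.le
  have hexp : t ^ 2 * ((m : ℝ) * v) / 2 - t * ((m : ℝ) * ε) = -(ε ^ 2 * m) / (2 * v) := by
    field_simp [ht]
    have htv : t * v = ε := by rw [ht]; exact div_mul_cancel₀ ε hv0.ne'
    linear_combination (t * v - ε) * htv
  -- tail bounds
  have htail1 : ((Finset.univ.filter fun τ => (m : ℝ) * ε ≤ U τ).card : ℝ)
      ≤ 2 ^ Fintype.card (Fin m × Fin d) * Real.exp (-(ε ^ 2 * m) / (2 * v)) := by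
    have h1 := filter_card_le_sum_exp U ((m : ℝ) * ε) t ht0
    have h2 := sum_exp_rsign c t
    rw [hsumc] at h2
    have h3 := le_trans h1 h2
    have h4 := (le_div_iff₀ (Real.exp_pos (t * ((m : ℝ) * ε)))).2 h3
    rwa [mul_div_assoc, ← Real.exp_sub, hexp] at h4
  have htail2 : ((Finset.univ.filter fun τ => U τ ≤ -((m : ℝ) * ε)).card : ℝ)
      ≤ 2 ^ Fintype.card (Fin m × Fin d) * Real.exp (-(ε ^ 2 * m) / (2 * v)) := by
    have hfeq : (Finset.univ.filter fun τ => U τ ≤ -((m : ℝ) * ε))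
        = (Finset.univ.filter fun τ => (m : ℝ) * ε ≤ -U τ) := by
      refine Finset.filter_congr fun τ _ => ?_
      constructor <;> intro h <;> linarith
    rw [hfeq]
    have h1 := filter_card_le_sum_exp (fun τ => -U τ) ((m : ℝ) * ε) t ht0
    have h2 := sum_exp_rsign c (-t)
    rw [hsumc, neg_sq] at h2
    have heq : (∑ τ : Fin m × Fin d → Bool, Real.exp (t * -U τ))
        = ∑ τ : Fin m × Fin d → Bool, Real.exp (-t * ∑ p, c p * rsign (τ p)) := by
      refine Finset.sum_congr rfl fun τ _ => ?_
      simp only [hU]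
      congr 1
      ring
    rw [heq] at h1
    have h3 := le_trans h1 h2
    have h4 := (le_div_iff₀ (Real.exp_pos (t * ((m : ℝ) * ε)))).2 h3
    rwa [mul_div_assoc, ← Real.exp_sub, hexp] at h4
  -- assembling
  have hmain : (Finset.univ.filter fun σ => ε ≤ |(m : ℝ)⁻¹ * T σ - A i i|).card
      = (Finset.univ.filter fun τ =>
          ((m : ℝ) * ε ≤ U τ ∨ U τ ≤ -((m : ℝ) * ε))).card := by
    rw [hcard fun x => ε ≤ |(m : ℝ)⁻¹ * x - A i i|]
    exact congrArg Finset.card (Finset.filter_congr fun τ _ => hpred τ)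
  rw [hmain]
  calc ((Finset.univ.filter fun τ =>
          ((m : ℝ) * ε ≤ U τ ∨ U τ ≤ -((m : ℝ) * ε))).card : ℝ)
      ≤ ((Finset.univ.filter fun τ => (m : ℝ) * ε ≤ U τ).card : ℝ)
        + ((Finset.univ.filter fun τ => U τ ≤ -((m : ℝ) * ε)).card : ℝ) := by
        rw [Finset.filter_or]
        exact_mod_cast Finset.card_union_le _ _
    _ ≤ 2 ^ Fintype.card (Fin m × Fin d) *
          (2 * Real.exp (-(ε ^ 2 * m) / (2 * v))) := by
        have := add_le_add htail1 htail2
        linarith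

/-- Concentration of Hutchinson's diagonal estimator at a single coordinate:
for i.i.d. Rademacher vectors `X¹, …, Xᵐ` and `Dᵐᵢ(A) = (1/m) Σₖ (Xᵏ ⊙ A Xᵏ)ᵢ`,
`P(|Dᵐᵢ(A) − Aᵢᵢ| ≥ ε) ≤ 2 exp(−ε² m / (2(‖Aᵢ‖₂² − Aᵢᵢ²)))`. -/
theorem hutchinson_single_entry_concentration {Ω : Type*} [MeasurableSpace Ω]
    (μ : Measure Ω) [IsProbabilityMeasure μ] (d m : ℕ) (hm : 0 < m)
    (X : Ω → Fin m → Fin d → ℝ)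
    (hmeas : ∀ k i, Measurable fun ω => X ω k i)
    (hindep : iIndepFun
      (fun (p : Fin m × Fin d) ω => X ω p.1 p.2) μ)
    (hlaw : ∀ k i, μ.map (fun ω => X ω k i) = rademacherLaw)
    (A : Matrix (Fin d) (Fin d) ℝ) (i : Fin d)
    (hrow : (A i i) ^ 2 < ∑ j, (A i j) ^ 2) (ε : ℝ) (hε : 0 ≤ ε) :
    μ {ω | ε ≤ |(m : ℝ)⁻¹ * (∑ k, X ω k i * (∑ j, A i j * X ω k j)) - A i i|}
      ≤ ENNReal.ofReal
          (2 * Real.exp (-(ε ^ 2 * m) / (2 * ((∑ j, (A i j) ^ 2) - (A i i) ^ 2)))) := by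
  classical
  set J : Ω → (Fin m × Fin d → ℝ) := fun ω p => X ω p.1 p.2 with hJdef
  have hJ : Measurable J := measurable_pi_lambda _ fun p => hmeas p.1 p.2
  set S : Set (Fin m × Fin d → ℝ) :=
    {x | ε ≤ |(m : ℝ)⁻¹ * (∑ k, x (k, i) * (∑ j, A i j * x (k, j))) - A i i|} with hSdef
  have hfS : Measurable fun x : Fin m × Fin d → ℝ =>
      |(m : ℝ)⁻¹ * (∑ k, x (k, i) * (∑ j, A i j * x (k, j))) - A i i| := by
    apply Measurable.abs
    apply Measurable.sub _ measurable_const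
    apply Measurable.const_mul
    apply Finset.measurable_sum
    intro k _
    exact (measurable_pi_apply _).mul
      (Finset.measurable_sum _ fun j _ => (measurable_pi_apply _).const_mul _)
  have hS : MeasurableSet S := measurableSet_le measurable_const hfS
  have hmap : Measure.pi (fun _ : Fin m × Fin d => rademacherLaw) = μ.map J := by
    refine Measure.pi_eq fun s hs => ?_
    rw [Measure.map_apply hJ (MeasurableSet.univ_pi hs)]
    have hpre : J ⁻¹' Set.pi Set.univ s
        = ⋂ p ∈ (Finset.univ : Finset (Fin m × Fin d)),
            (fun ω => X ω p.1 p.2) ⁻¹' s p := by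
      ext ω
      simp [hJdef, Set.mem_univ_pi]
    rw [hpre, hindep.measure_inter_preimage_eq_mul Finset.univ (fun p _ => hs p)]
    refine Finset.prod_congr rfl fun p _ => ?_
    rw [← hlaw p.1 p.2, Measure.map_apply (hmeas p.1 p.2) (hs p)]
  have hμS : μ {ω | ε ≤ |(m : ℝ)⁻¹ * (∑ k, X ω k i * (∑ j, A i j * X ω k j)) - A i i|}
      = (μ.map J) S := by
    rw [Measure.map_apply hJ hS]
    rfl
  rw [hμS, ← hmap, pi_rademacher_apply hS]
  -- pass to the counting bound
  have hCeq : (Finset.univ.filter fun σ : Fin m × Fin d → Bool =>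
        (fun p => rsign (σ p)) ∈ S).card
      = (Finset.univ.filter fun σ : Fin m × Fin d → Bool =>
        ε ≤ |(m : ℝ)⁻¹ * (∑ k, rsign (σ (k, i)) * (∑ j, A i j * rsign (σ (k, j)))) - A i i|).card := by
    congr 1
  rw [hCeq]
  have hcount := count_bound d m hm A i hrow ε hε
  have h2n : ((2 : ℝ≥0∞) ^ Fintype.card (Fin m × Fin d)) ≠ 0 := by positivity
  have h2t : ((2 : ℝ≥0∞) ^ Fintype.card (Fin m × Fin d)) ≠ ⊤ := by
    simp [ENNReal.pow_ne_top]
  rw [ENNReal.inv_mul_le_iff h2n h2t]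
  have hB : (0 : ℝ) ≤ 2 * Real.exp (-(ε ^ 2 * m) / (2 * ((∑ j, (A i j) ^ 2) - (A i i) ^ 2))) := by
    positivity
  calc ((((Finset.univ.filter fun σ : Fin m × Fin d → Bool =>
        ε ≤ |(m : ℝ)⁻¹ * (∑ k, rsign (σ (k, i)) * (∑ j, A i j * rsign (σ (k, j)))) - A i i|).card : ℕ)) : ℝ≥0∞)
      = ENNReal.ofReal (((Finset.univ.filter fun σ : Fin m × Fin d → Bool =>
        ε ≤ |(m : ℝ)⁻¹ * (∑ k, rsign (σ (k, i)) * (∑ j, A i j * rsign (σ (k, j)))) - A i i|).card : ℝ)) := by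
        rw [ENNReal.ofReal_natCast]
    _ ≤ ENNReal.ofReal ((2 : ℝ) ^ Fintype.card (Fin m × Fin d) *
          (2 * Real.exp (-(ε ^ 2 * m) / (2 * ((∑ j, (A i j) ^ 2) - (A i i) ^ 2))))) :=
        ENNReal.ofReal_le_ofReal hcount
    _ = (2 : ℝ≥0∞) ^ Fintype.card (Fin m × Fin d) *
          ENNReal.ofReal (2 * Real.exp (-(ε ^ 2 * m) / (2 * ((∑ j, (A i j) ^ 2) - (A i i) ^ 2)))) := by
        rw [ENNReal.ofReal_mul (by positivity), ENNReal.ofReal_pow (by norm_num : (0:ℝ) ≤ 2),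
          ENNReal.ofReal_ofNat]
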